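/- arXiv:0705.3852 — 4 statements merged into one kernel-verified Lean document; each statement's English description precedes it below -/
import Mathlib

section
/- Let n ≥ 1 and let R = (ℤ[U₀,U₁,...,Uₙ])[[t]] be the ring of formal power series in t with coefficients in the integral multivariable polynomial ring. For every element ξ ∈ R and a = U₀ − t·ξ, the quotient ring R/(a) of R by the principal ideal generated by a is isomorphic, as a ring, to (ℤ[U₁,...,Uₙ])[[t]], the power series ring in t over the polynomial ring in the remaining n variables. -/
/-!
Via `MvPolynomial.finSuccEquiv`, `R` is `S[U₀]⟦t⟧` with `S = ℤ[U₁,…,Uₙ]`, and `a = U₀ - tξ`.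
Long division by `a`, solving for the `t`-coefficients one at a time, writes every `F ∈ S[U₀]⟦t⟧`
as `F = a Q + r` with `r ∈ S⟦t⟧`. The remainder is unique: comparing the lowest `t`-coefficient
of `a Q = r` with `Q ≠ 0` gives `U₀ q = c` with `q ≠ 0` and `c ∈ S`, which is impossible.
Hence `S⟦t⟧ → R/(a)` is a ring isomorphism.
-/

open PowerSeries
open scoped Polynomial

namespace Polynomial

theorem eq_zero_of_X_mul_eq_C {S : Type*} [Semiring S] {p : S[X]} {c : S}
    (h : X * p = C c) : p = 0 ∧ c = 0 := by
  have hc : c = 0 := by simpa using (congrArg (coeff · 0) h).symm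
  refine ⟨?_, hc⟩
  rw [hc, map_zero] at h
  exact isRegular_X.left (by simpa using h)

end Polynomial

namespace PowerSeries

theorem coeff_X_mul_mul_eq_sum_fin {R : Type*} [CommSemiring R] (ξ Q : R⟦X⟧) (k : ℕ) :
    coeff k (X * ξ * Q) = ∑ j : Fin k, coeff (k - 1 - j) ξ * coeff j Q := by
  cases k with
  | zero => simp
  | succ m =>
    rw [mul_assoc, coeff_succ_X_mul, mul_comm, coeff_mul,
      Finset.Nat.sum_antidiagonal_eq_sum_range_succ (fun i j => coeff i Q * coeff j ξ),
      ← Fin.sum_univ_eq_sum_range]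
    refine Finset.sum_congr rfl fun j _ => ?_
    rw [mul_comm, Nat.add_sub_cancel]

noncomputable def mapRingEquiv {R S : Type*} [Semiring R] [Semiring S] (e : R ≃+* S) : R⟦X⟧ ≃+* S⟦X⟧ :=
  RingEquiv.ofRingHom (map (e : R →+* S)) (map (e.symm : S →+* R))
    (by ext; simp) (by ext; simp)

variable {S : Type*} [CommRing S]

/-- The `k`-th coefficient of the running dividend in the long division by `C X - X * ξ`: its
`divX` is the `k`-th quotient coefficient and its constant term the `k`-th remainder coefficient. -/
noncomputable def dividendCXSubXMul (ξ F : S[X]⟦X⟧) : ℕ → S[X]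
  | k => coeff k F + ∑ j : Fin k, coeff (k - 1 - j) ξ * (dividendCXSubXMul ξ F j).divX

theorem eq_mul_add_map_C (ξ F : S[X]⟦X⟧) :
    F = (C Polynomial.X - X * ξ) * mk (fun k => (dividendCXSubXMul ξ F k).divX)
      + map Polynomial.C (mk fun k => (dividendCXSubXMul ξ F k).coeff 0) := by
  refine ext fun k => ?_
  have hD : dividendCXSubXMul ξ F k =
      coeff k F + ∑ j : Fin k, coeff (k - 1 - j) ξ * (dividendCXSubXMul ξ F j).divX := by
    rw [dividendCXSubXMul]
  rw [map_add, sub_mul, map_sub, coeff_C_mul, coeff_X_mul_mul_eq_sum_fin, coeff_map]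
  simp only [coeff_mk]
  have hdiv := Polynomial.X_mul_divX_add (dividendCXSubXMul ξ F k)
  linear_combination -hdiv - hD

theorem eq_zero_of_mul_eq_map_C {ξ Q : S[X]⟦X⟧} {r : S⟦X⟧}
    (h : (C Polynomial.X - X * ξ) * Q = map Polynomial.C r) : r = 0 := by
  have hQ : ∀ k, coeff k Q = 0 := by
    intro k
    induction k using Nat.strong_induction_on with
    | _ k ih =>
      have hk := congrArg (coeff k) h
      rw [sub_mul, map_sub, coeff_C_mul, coeff_X_mul_mul_eq_sum_fin, coeff_map,
        Finset.sum_eq_zero fun j _ => by rw [ih j j.2, mul_zero], sub_zero] at hk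
      exact (Polynomial.eq_zero_of_X_mul_eq_C hk).1
  have hQ0 : Q = 0 := ext hQ
  rw [hQ0, mul_zero, eq_comm, map_eq_zero_iff _ (map_injective _ Polynomial.C_injective)] at h
  exact h

theorem bijective_quotientMk_comp_map_C (ξ : S[X]⟦X⟧) :
    Function.Bijective ((Ideal.Quotient.mk (Ideal.span {C Polynomial.X - X * ξ})).comp
      (map (Polynomial.C : S →+* S[X]))) := by
  refine ⟨(injective_iff_map_eq_zero _).2 fun r hr => ?_, fun x => ?_⟩
  · rw [RingHom.comp_apply, Ideal.Quotient.eq_zero_iff_mem, Ideal.mem_span_singleton'] at hr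
    obtain ⟨Q, hQ⟩ := hr
    exact eq_zero_of_mul_eq_map_C (by rw [mul_comm, hQ])
  · obtain ⟨F, rfl⟩ := Ideal.Quotient.mk_surjective x
    refine ⟨mk fun k => (dividendCXSubXMul ξ F k).coeff 0, ?_⟩
    conv_rhs => rw [eq_mul_add_map_C ξ F]
    rw [RingHom.comp_apply, map_add, map_mul, Ideal.Quotient.mk_singleton_self, zero_mul,
      zero_add]

noncomputable def quotientSpanCXSubXMulEquiv (ξ : S[X]⟦X⟧) :
    (S[X]⟦X⟧ ⧸ Ideal.span {C Polynomial.X - X * ξ}) ≃+* S⟦X⟧ :=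
  (RingEquiv.ofBijective _ (bijective_quotientMk_comp_map_C ξ)).symm

end PowerSeries

theorem stmt_1_general (n : ℕ)
    (ξ : PowerSeries (MvPolynomial (Fin (n + 1)) ℤ)) :
    Nonempty
      ((PowerSeries (MvPolynomial (Fin (n + 1)) ℤ) ⧸
          Ideal.span {PowerSeries.C (R := MvPolynomial (Fin (n + 1)) ℤ) (MvPolynomial.X 0)
            - PowerSeries.X * ξ}) ≃+*
        PowerSeries (MvPolynomial (Fin n) ℤ)) := by
  let e := mapRingEquiv (MvPolynomial.finSuccEquiv ℤ n).toRingEquiv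
  have hspan : Ideal.span {C Polynomial.X - X * e ξ} =
      (Ideal.span {C (MvPolynomial.X 0) - X * ξ}).map (e : _ →+* _) := by
    rw [Ideal.map_span, Set.image_singleton]
    simp [e, mapRingEquiv, MvPolynomial.finSuccEquiv_X_zero]
  exact ⟨(Ideal.quotientEquiv _ _ e hspan).trans (quotientSpanCXSubXMulEquiv (e ξ))⟩

/-- For `n ≥ 1`, in `R = (ℤ[U₀,…,Uₙ])[[t]]`, for every `ξ ∈ R` and
`a = U₀ − t·ξ`, the quotient `R/(a)` is isomorphic as a ring to `(ℤ[U₁,…,Uₙ])[[t]]`. -/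
theorem stmt_1 (n : ℕ) (hn : 1 ≤ n)
    (ξ : PowerSeries (MvPolynomial (Fin (n + 1)) ℤ)) :
    Nonempty
      ((PowerSeries (MvPolynomial (Fin (n + 1)) ℤ) ⧸
          Ideal.span {PowerSeries.C (R := MvPolynomial (Fin (n + 1)) ℤ) (MvPolynomial.X 0)
            - PowerSeries.X * ξ}) ≃+*
        PowerSeries (MvPolynomial (Fin n) ℤ)) :=
  stmt_1_general n ξ
end

section
/- Let n ≥ 1 and let R = (ℤ[U₀,U₁,...,Uₙ])[[t]] be the ring of formal power series in t with coefficients in the integral multivariable polynomial ring. For every element ξ ∈ R and a = U₀ − t·ξ, there exist a unit u of R congruent to 1 modulo t, and an element b of R which is divisible by t and which lies in the subring (ℤ[U₁,...,Uₙ])[[t]] of power series whose coefficients do not involve the variable U₀, such that u·a = U₀ − b. In particular, the ideal of R generated by a equals the ideal generated by U₀ − b. -/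
/-!
With `u = 1 + t v` one has `u (U₀ - t ξ) = U₀ - t ((1 + t v) ξ - U₀ v)`, so it suffices to choose
`v` such that every coefficient of `(1 + t v) ξ - U₀ v` is free of `U₀`. Every polynomial splits as
`U₀ q + p` with `p` free of `U₀`, and the `k`-th coefficient of `(1 + t v) ξ` only involves
`v₀, …, v_{k-1}`; so `v_k` can be chosen recursively as the `U₀`-quotient of that coefficient.
-/

namespace PowerSeries

variable {A : Type*} [CommRing A]

theorem coeff_one_add_X_mul_mul (f : ℕ → A) (ξ : A⟦X⟧) (k : ℕ) :
    coeff k ((1 + X * mk f) * ξ) = coeff k ξ + ∑ i : Fin k, f i * coeff (k - 1 - i) ξ := by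
  rw [add_mul, one_mul, mul_assoc, map_add]
  cases k with
  | zero => simp
  | succ k =>
    rw [coeff_succ_X_mul, coeff_mul, Finset.Nat.sum_antidiagonal_eq_sum_range_succ_mk,
      Fin.sum_univ_eq_sum_range (fun i => f i * coeff (k + 1 - 1 - i) ξ)]
    simp

/-- `quotRecCoeff q ξ k = q (coeff k ((1 + X * v) * ξ))` for `v = mk (quotRecCoeff q ξ)`:
that coefficient only involves the `vᵢ` with `i < k`. -/
noncomputable def quotRecCoeff (q : A → A) (ξ : A⟦X⟧) (k : ℕ) : A :=
  q (coeff k ξ + ∑ i : Fin k, quotRecCoeff q ξ i * coeff (k - 1 - i) ξ)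

theorem quotRecCoeff_eq (q : A → A) (ξ : A⟦X⟧) (k : ℕ) :
    quotRecCoeff q ξ k = q (coeff k ((1 + X * mk (quotRecCoeff q ξ)) * ξ)) := by
  rw [coeff_one_add_X_mul_mul, quotRecCoeff]

theorem exists_forall_coeff_one_add_X_mul_mul_sub_C_mul_mem {B : Set A} {x : A}
    (hx : ∀ a, ∃ q, a - x * q ∈ B) (ξ : A⟦X⟧) :
    ∃ v : A⟦X⟧, ∀ k, coeff k ((1 + X * v) * ξ - C x * v) ∈ B := by
  choose q hq using hx
  refine ⟨mk (quotRecCoeff q ξ), fun k => ?_⟩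
  rw [map_sub, coeff_C_mul, coeff_mk, quotRecCoeff_eq]
  exact hq _

theorem mem_range_map_of_forall_coeff_mem {R S : Type*} [CommRing R] [CommRing S]
    (φ : R →+* S) {f : S⟦X⟧} (hf : ∀ k, coeff k f ∈ φ.range) : f ∈ Set.range (map φ) := by
  choose g hg using hf
  exact ⟨mk g, ext fun k => by rw [coeff_map, coeff_mk, hg]⟩

end PowerSeries

namespace MvPolynomial

theorem exists_sub_X_zero_mul_mem_range_rename_succ {R : Type*} [CommRing R] {n : ℕ}
    (a : MvPolynomial (Fin (n + 1)) R) :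
    ∃ q, a - X 0 * q ∈
      (rename Fin.succ : MvPolynomial (Fin n) R →ₐ[R] MvPolynomial (Fin (n + 1)) R).range := by
  induction a using MvPolynomial.induction_on with
  | C c => exact ⟨0, by simpa using ⟨C c, rename_C _ _⟩⟩
  | add a b ha hb =>
    obtain ⟨qa, hqa⟩ := ha
    obtain ⟨qb, hqb⟩ := hb
    exact ⟨qa + qb, by simpa [mul_add, add_sub_add_comm] using add_mem hqa hqb⟩
  | mul_X a i ha =>
    obtain ⟨q, hq⟩ := ha
    cases i using Fin.cases with
    | zero => exact ⟨a, by simp [mul_comm]⟩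
    | succ j =>
      refine ⟨q * X j.succ, ?_⟩
      have hXj : X j.succ ∈
          (rename Fin.succ : MvPolynomial (Fin n) R →ₐ[R] MvPolynomial (Fin (n + 1)) R).range :=
        ⟨X j, rename_X _ _⟩
      convert mul_mem hq hXj using 1
      ring

end MvPolynomial

theorem stmt_2_general (n : ℕ)
    (ξ : PowerSeries (MvPolynomial (Fin (n + 1)) ℤ)) :
    ∃ (u : (PowerSeries (MvPolynomial (Fin (n + 1)) ℤ))ˣ)
      (b : PowerSeries (MvPolynomial (Fin (n + 1)) ℤ)),
      ((u : PowerSeries (MvPolynomial (Fin (n + 1)) ℤ)) - 1 ∈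
          Ideal.span {(PowerSeries.X : PowerSeries (MvPolynomial (Fin (n + 1)) ℤ))}) ∧
      ((PowerSeries.X : PowerSeries (MvPolynomial (Fin (n + 1)) ℤ)) ∣ b) ∧
      (b ∈ Set.range
          (PowerSeries.map
            (MvPolynomial.rename (Fin.succ : Fin n → Fin (n + 1)) :
              MvPolynomial (Fin n) ℤ →ₐ[ℤ] MvPolynomial (Fin (n + 1)) ℤ).toRingHom)) ∧
      ((u : PowerSeries (MvPolynomial (Fin (n + 1)) ℤ)) *
          (PowerSeries.C (R := MvPolynomial (Fin (n + 1)) ℤ) (MvPolynomial.X 0)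
            - PowerSeries.X * ξ)
        = PowerSeries.C (R := MvPolynomial (Fin (n + 1)) ℤ) (MvPolynomial.X 0) - b) ∧
      (Ideal.span {PowerSeries.C (R := MvPolynomial (Fin (n + 1)) ℤ) (MvPolynomial.X 0)
            - PowerSeries.X * ξ}
        = Ideal.span {PowerSeries.C (R := MvPolynomial (Fin (n + 1)) ℤ) (MvPolynomial.X 0) - b}) := by
  obtain ⟨v, hv⟩ := PowerSeries.exists_forall_coeff_one_add_X_mul_mul_sub_C_mul_mem
    MvPolynomial.exists_sub_X_zero_mul_mem_range_rename_succ ξ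
  set β := (1 + PowerSeries.X * v) * ξ - PowerSeries.C (MvPolynomial.X 0) * v
  obtain ⟨u, hu⟩ : IsUnit (1 + PowerSeries.X * v) := by
    simp [PowerSeries.isUnit_iff_constantCoeff]
  have hua : (u : PowerSeries (MvPolynomial (Fin (n + 1)) ℤ)) *
      (PowerSeries.C (MvPolynomial.X 0) - PowerSeries.X * ξ)
      = PowerSeries.C (MvPolynomial.X 0) - PowerSeries.X * β := by
    rw [hu]
    ring
  refine ⟨u, PowerSeries.X * β, ?_, dvd_mul_right _ _, ?_, hua, ?_⟩
  · rw [hu, add_sub_cancel_left]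
    exact Ideal.mul_mem_right _ _ (Ideal.mem_span_singleton_self _)
  · refine PowerSeries.mem_range_map_of_forall_coeff_mem _ fun k => ?_
    cases k with
    | zero => simp
    | succ k => rw [PowerSeries.coeff_succ_X_mul]; exact hv k
  · rw [← hua, Ideal.span_singleton_mul_left_unit u.isUnit]

/-- For `n ≥ 1`, in `R = (ℤ[U₀,…,Uₙ])[[t]]`, for every `ξ ∈ R` and
`a = U₀ − t·ξ`, there exist a unit `u` of `R` congruent to `1` modulo `t`, and an element
`b` divisible by `t` whose coefficients do not involve `U₀` (i.e. `b` lies in the image of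
`(ℤ[U₁,…,Uₙ])[[t]]` under the variable inclusion `i ↦ i+1`), with `u·a = U₀ − b`.
In particular `(a) = (U₀ − b)`. -/
theorem stmt_2 (n : ℕ) (hn : 1 ≤ n)
    (ξ : PowerSeries (MvPolynomial (Fin (n + 1)) ℤ)) :
    ∃ (u : (PowerSeries (MvPolynomial (Fin (n + 1)) ℤ))ˣ)
      (b : PowerSeries (MvPolynomial (Fin (n + 1)) ℤ)),
      ((u : PowerSeries (MvPolynomial (Fin (n + 1)) ℤ)) - 1 ∈
          Ideal.span {(PowerSeries.X : PowerSeries (MvPolynomial (Fin (n + 1)) ℤ))}) ∧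
      ((PowerSeries.X : PowerSeries (MvPolynomial (Fin (n + 1)) ℤ)) ∣ b) ∧
      (b ∈ Set.range
          (PowerSeries.map
            (MvPolynomial.rename (Fin.succ : Fin n → Fin (n + 1)) :
              MvPolynomial (Fin n) ℤ →ₐ[ℤ] MvPolynomial (Fin (n + 1)) ℤ).toRingHom)) ∧
      ((u : PowerSeries (MvPolynomial (Fin (n + 1)) ℤ)) *
          (PowerSeries.C (R := MvPolynomial (Fin (n + 1)) ℤ) (MvPolynomial.X 0)
            - PowerSeries.X * ξ)
        = PowerSeries.C (R := MvPolynomial (Fin (n + 1)) ℤ) (MvPolynomial.X 0) - b) ∧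
      (Ideal.span {PowerSeries.C (R := MvPolynomial (Fin (n + 1)) ℤ) (MvPolynomial.X 0)
            - PowerSeries.X * ξ}
        = Ideal.span {PowerSeries.C (R := MvPolynomial (Fin (n + 1)) ℤ) (MvPolynomial.X 0) - b}) :=
  stmt_2_general n ξ
end

section
/- In the polynomial ring P = ℤ[t, Ua, Ub, Uc, Ud] in five variables, let I_X be the ideal generated by t·Ua + t·Ub − Uc − Ud and t²·Ua·Ub − Uc·Ud, and let I_R be the ideal generated by t·Ua − Uc and t·Ub − Ud. Then both products (t·Ua − Uc)·(t·Ua − Ud) and (t·Ub − Ud)·(t·Ua − Ud) lie in I_X; equivalently (t·Ua − Ud)·I_R ⊆ I_X, so that multiplication by t·Ua − Ud induces a well-defined P-module homomorphism P/I_R → P/I_X (the zip homomorphism). -/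
/-- In `P = ℤ[t, Ua, Ub, Uc, Ud]`, with
`I_X = (t·Ua + t·Ub − Uc − Ud, t²·Ua·Ub − Uc·Ud)` and `I_R = (t·Ua − Uc, t·Ub − Ud)`,
both `(t·Ua − Uc)·(t·Ua − Ud)` and `(t·Ub − Ud)·(t·Ua − Ud)` lie in `I_X`; equivalently
`(t·Ua − Ud)·I_R ⊆ I_X`, so that multiplication by `t·Ua − Ud` induces a well-defined
`P`-module homomorphism `P/I_R → P/I_X` (the zip homomorphism). -/
theorem stmt_5 :
    letI P := MvPolynomial (Fin 5) ℤ
    letI t : P := MvPolynomial.X 0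
    letI Ua : P := MvPolynomial.X 1
    letI Ub : P := MvPolynomial.X 2
    letI Uc : P := MvPolynomial.X 3
    letI Ud : P := MvPolynomial.X 4
    letI IX : Ideal P := Ideal.span {t * Ua + t * Ub - Uc - Ud, t ^ 2 * Ua * Ub - Uc * Ud}
    letI IR : Ideal P := Ideal.span {t * Ua - Uc, t * Ub - Ud}
    ((t * Ua - Uc) * (t * Ua - Ud) ∈ IX) ∧
    ((t * Ub - Ud) * (t * Ua - Ud) ∈ IX) ∧
    (∀ x ∈ IR, (t * Ua - Ud) * x ∈ IX) ∧
    ∃ f : (P ⧸ IR) →ₗ[P] (P ⧸ IX),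
      ∀ x : P, f (Ideal.Quotient.mk IR x) = Ideal.Quotient.mk IX ((t * Ua - Ud) * x) := by
  set t : MvPolynomial (Fin 5) ℤ := MvPolynomial.X 0 with ht
  set Ua : MvPolynomial (Fin 5) ℤ := MvPolynomial.X 1 with ha
  set Ub : MvPolynomial (Fin 5) ℤ := MvPolynomial.X 2 with hb
  set Uc : MvPolynomial (Fin 5) ℤ := MvPolynomial.X 3 with hc
  set Ud : MvPolynomial (Fin 5) ℤ := MvPolynomial.X 4 with hd
  set IX : Ideal (MvPolynomial (Fin 5) ℤ) := Ideal.span {t * Ua + t * Ub - Uc - Ud, t ^ 2 * Ua * Ub - Uc * Ud} with hIX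
  set IR : Ideal (MvPolynomial (Fin 5) ℤ) := Ideal.span {t * Ua - Uc, t * Ub - Ud} with hIR
  have hg1 : (t * Ua + t * Ub - Uc - Ud) ∈ IX :=
    Ideal.subset_span (Set.mem_insert _ _)
  have hg2 : (t ^ 2 * Ua * Ub - Uc * Ud) ∈ IX :=
    Ideal.subset_span (Set.mem_insert_of_mem _ rfl)
  have h1 : (t * Ua - Uc) * (t * Ua - Ud) ∈ IX := by
    have : (t * Ua - Uc) * (t * Ua - Ud)
        = (t * Ua) * (t * Ua + t * Ub - Uc - Ud) - (t ^ 2 * Ua * Ub - Uc * Ud) := by ring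
    rw [this]
    exact sub_mem (Ideal.mul_mem_left _ _ hg1) hg2
  have h2 : (t * Ub - Ud) * (t * Ua - Ud) ∈ IX := by
    have : (t * Ub - Ud) * (t * Ua - Ud)
        = (t ^ 2 * Ua * Ub - Uc * Ud) - Ud * (t * Ua + t * Ub - Uc - Ud) := by ring
    rw [this]
    exact sub_mem hg2 (Ideal.mul_mem_left _ _ hg1)
  have h3 : ∀ x ∈ IR, (t * Ua - Ud) * x ∈ IX := by
    intro x hx
    refine Submodule.span_induction ?_ ?_ ?_ ?_ hx
    · rintro y (rfl | rfl)
      · rw [mul_comm]; exact h1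
      · rw [mul_comm]; exact h2
    · simp
    · intro a b _ _ ha hb
      rw [mul_add]; exact add_mem ha hb
    · intro c a _ ha
      rw [smul_eq_mul, mul_left_comm]
      exact Ideal.mul_mem_left _ _ ha
  refine ⟨h1, h2, h3, ?_⟩
  let g : MvPolynomial (Fin 5) ℤ →ₗ[MvPolynomial (Fin 5) ℤ] MvPolynomial (Fin 5) ℤ ⧸ IX :=
    { toFun := fun x => Ideal.Quotient.mk IX ((t * Ua - Ud) * x)
      map_add' := by intro a b; rw [mul_add, map_add]
      map_smul' := by
        intro c a
        simp only [smul_eq_mul, RingHom.id_apply]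
        rw [mul_left_comm, map_mul]
        rfl }
  refine ⟨Submodule.liftQ IR g ?_, fun x => rfl⟩
  intro x hx
  show Ideal.Quotient.mk IX ((t * Ua - Ud) * x) = 0
  rw [Ideal.Quotient.eq_zero_iff_mem]
  exact h3 x hx
end

section
/- Let R₀ = ℤ[[t]] be the ring of integral formal power series in t. In the polynomial ring R₀[A₁, A₂, B₁, B₂, C₁, C₂] in six variables, let I be the ideal generated by the seven elements: A₁ + A₂ − t·B₁ − t·B₂; B₁ + B₂ − t·C₁ − t·C₂; C₁ + C₂ − t·A₂; A₁; A₁·A₂ − t²·B₁·B₂; B₁·B₂ − t²·C₁·C₂; and C₁·C₂. Then the quotient R₀[A₁,...,C₂]/I is isomorphic as an R₀-algebra to R₀[B, C]/(B², C²), the quotient of the polynomial ring in two variables over R₀ by the ideal generated by the squares of the variables. -/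
set_option maxHeartbeats 1000000
set_option synthInstance.maxHeartbeats 400000

noncomputable section

open MvPolynomial

namespace Stmt6

abbrev R₀ := PowerSeries ℤ
abbrev P := MvPolynomial (Fin 6) R₀
abbrev tt : R₀ := PowerSeries.X

def I : Ideal P := Ideal.span
  {X 0 + X 1 - C tt * X 2 - C tt * X 3,
   X 2 + X 3 - C tt * X 4 - C tt * X 5,
   X 4 + X 5 - C tt * X 1,
   X 0,
   X 0 * X 1 - C tt ^ 2 * X 2 * X 3,
   X 2 * X 3 - C tt ^ 2 * X 4 * X 5,
   X 4 * X 5}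

lemma g1_mem : (X 0 + X 1 - C tt * X 2 - C tt * X 3 : P) ∈ I :=
  Ideal.subset_span (by simp [Set.mem_insert_iff])
lemma g2_mem : (X 2 + X 3 - C tt * X 4 - C tt * X 5 : P) ∈ I :=
  Ideal.subset_span (by simp [Set.mem_insert_iff])
lemma g3_mem : (X 4 + X 5 - C tt * X 1 : P) ∈ I :=
  Ideal.subset_span (by simp [Set.mem_insert_iff])
lemma g4_mem : (X 0 : P) ∈ I :=
  Ideal.subset_span (by simp [Set.mem_insert_iff])
lemma g6_mem : (X 2 * X 3 - C tt ^ 2 * X 4 * X 5 : P) ∈ I :=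
  Ideal.subset_span (by simp [Set.mem_insert_iff])
lemma g7_mem : (X 4 * X 5 : P) ∈ I :=
  Ideal.subset_span (by simp [Set.mem_insert_iff])

lemma hu : IsUnit (1 - tt ^ 3) := by
  rw [PowerSeries.isUnit_iff_constantCoeff]
  simp

lemma memBB : (X 2 + X 3 : P) ∈ I := by
  obtain ⟨u, hu⟩ := hu
  have key : (C (1 - tt ^ 3) : P) * (X 2 + X 3) ∈ I := by
    have : (C (1 - tt ^ 3) : P) * (X 2 + X 3) =
        (X 2 + X 3 - C tt * X 4 - C tt * X 5)
        + C tt * (X 4 + X 5 - C tt * X 1)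
        + C tt ^ 2 * (X 0 + X 1 - C tt * X 2 - C tt * X 3)
        - C tt ^ 2 * (X 0) := by
      simp only [map_sub, map_one, map_pow]; ring
    rw [this]
    exact I.sub_mem (I.add_mem (I.add_mem g2_mem (I.mul_mem_left _ g3_mem))
      (I.mul_mem_left _ g1_mem)) (I.mul_mem_left _ g4_mem)
  have : (X 2 + X 3 : P) = C ((↑u⁻¹ : R₀)) * (C (1 - tt ^ 3) * (X 2 + X 3)) := by
    rw [← mul_assoc, ← map_mul, ← hu, Units.inv_mul, map_one, one_mul]
  rw [this]
  exact I.mul_mem_left _ key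

lemma memA2 : (X 1 : P) ∈ I := by
  have : (X 1 : P) = (X 0 + X 1 - C tt * X 2 - C tt * X 3) - X 0
      + C tt * (X 2 + X 3) := by ring
  rw [this]
  exact I.add_mem (I.sub_mem g1_mem g4_mem) (I.mul_mem_left _ memBB)

lemma memCC : (X 4 + X 5 : P) ∈ I := by
  have : (X 4 + X 5 : P) = (X 4 + X 5 - C tt * X 1) + C tt * X 1 := by ring
  rw [this]
  exact I.add_mem g3_mem (I.mul_mem_left _ memA2)

lemma memB2 : (X 2 : P) ^ 2 ∈ I := by
  have : (X 2 : P) ^ 2 = X 2 * (X 2 + X 3)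
      - ((X 2 * X 3 - C tt ^ 2 * X 4 * X 5) + C tt ^ 2 * (X 4 * X 5)) := by ring
  rw [this]
  exact I.sub_mem (I.mul_mem_left _ memBB)
    (I.add_mem g6_mem (I.mul_mem_left _ g7_mem))

lemma memC2 : (X 4 : P) ^ 2 ∈ I := by
  have : (X 4 : P) ^ 2 = X 4 * (X 4 + X 5) - X 4 * X 5 := by ring
  rw [this]
  exact I.sub_mem (I.mul_mem_left _ memCC) g7_mem

def J : Ideal (MvPolynomial (Fin 2) R₀) :=
  Ideal.span {(X 0 : MvPolynomial (Fin 2) R₀) ^ 2, (X 1 : MvPolynomial (Fin 2) R₀) ^ 2}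

abbrev Q2 := MvPolynomial (Fin 2) R₀ ⧸ J

def x : Q2 := Ideal.Quotient.mk J (X 0)
def y : Q2 := Ideal.Quotient.mk J (X 1)

lemma x2 : x ^ 2 = 0 := by
  rw [x, ← map_pow, Ideal.Quotient.eq_zero_iff_mem]
  exact Ideal.subset_span (by simp)

lemma y2 : y ^ 2 = 0 := by
  rw [y, ← map_pow, Ideal.Quotient.eq_zero_iff_mem]
  exact Ideal.subset_span (by simp)

def φ0 : P →ₐ[R₀] Q2 := aeval ![0, 0, x, -x, y, -y]

lemma φ0_0 : φ0 (X 0) = 0 := by rw [φ0, aeval_X]; rfl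
lemma φ0_1 : φ0 (X 1) = 0 := by rw [φ0, aeval_X]; rfl
lemma φ0_2 : φ0 (X 2) = x := by rw [φ0, aeval_X]; rfl
lemma φ0_3 : φ0 (X 3) = -x := by rw [φ0, aeval_X]; rfl
lemma φ0_4 : φ0 (X 4) = y := by rw [φ0, aeval_X]; rfl
lemma φ0_5 : φ0 (X 5) = -y := by rw [φ0, aeval_X]; rfl
lemma φ0_C (r : R₀) : φ0 (C r) = algebraMap R₀ Q2 r := aeval_C _ r

lemma hkerφ : ∀ a : P, a ∈ I → φ0 a = 0 := by
  intro a ha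
  induction ha using Submodule.span_induction with
  | zero => exact map_zero φ0
  | add u v _ _ hu hv => rw [map_add, hu, hv, add_zero]
  | smul r u _ hu => rw [smul_eq_mul, map_mul, hu]; exact mul_zero (φ0 r)
  | mem p hp =>
    simp only [Set.mem_insert_iff, Set.mem_singleton_iff] at hp
    rcases hp with h|h|h|h|h|h|h <;> subst h <;>
      simp only [map_sub, map_add, map_mul, map_pow, φ0_0, φ0_1, φ0_2, φ0_3, φ0_4, φ0_5, φ0_C]
    · ring
    · ring
    · ring
    · linear_combination (algebraMap R₀ Q2 tt) ^ 2 * x2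
    · linear_combination (-1 : Q2) * x2 + (algebraMap R₀ Q2 tt) ^ 2 * y2
    · linear_combination (-1 : Q2) * y2

def Φ : (P ⧸ I) →ₐ[R₀] Q2 := Ideal.Quotient.liftₐ I φ0 hkerφ

def ψ0 : MvPolynomial (Fin 2) R₀ →ₐ[R₀] (P ⧸ I) :=
  aeval ![Ideal.Quotient.mk I (X 2), Ideal.Quotient.mk I (X 4)]

lemma ψ0_0 : ψ0 (X 0) = Ideal.Quotient.mk I (X 2) := by rw [ψ0, aeval_X]; rfl
lemma ψ0_1 : ψ0 (X 1) = Ideal.Quotient.mk I (X 4) := by rw [ψ0, aeval_X]; rfl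

lemma hkerψ : ∀ a : MvPolynomial (Fin 2) R₀, a ∈ J → ψ0 a = 0 := by
  intro a ha
  induction ha using Submodule.span_induction with
  | zero => exact map_zero ψ0
  | add u v _ _ hu hv => rw [map_add, hu, hv, add_zero]
  | smul r u _ hu => rw [smul_eq_mul, map_mul, hu]; exact mul_zero (ψ0 r)
  | mem p hp =>
    rcases hp with h|h <;> subst h <;> rw [map_pow]
    · rw [ψ0_0, ← map_pow, Ideal.Quotient.eq_zero_iff_mem]; exact memB2
    · rw [ψ0_1, ← map_pow, Ideal.Quotient.eq_zero_iff_mem]; exact memC2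

def Ψ : Q2 →ₐ[R₀] (P ⧸ I) := Ideal.Quotient.liftₐ J ψ0 hkerψ

lemma Φ_mk (p : P) : Φ (Ideal.Quotient.mk I p) = φ0 p := rfl
lemma Ψ_mk (p : MvPolynomial (Fin 2) R₀) : Ψ (Ideal.Quotient.mk J p) = ψ0 p := rfl

lemma ΦΨ : Φ.comp Ψ = AlgHom.id R₀ Q2 := by
  apply Ideal.Quotient.algHom_ext
  apply MvPolynomial.algHom_ext
  intro i
  fin_cases i
  · show Φ (Ψ (Ideal.Quotient.mk J (X 0))) = Ideal.Quotient.mk J (X 0)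
    rw [Ψ_mk, ψ0_0, Φ_mk, φ0_2, x]
  · show Φ (Ψ (Ideal.Quotient.mk J (X 1))) = Ideal.Quotient.mk J (X 1)
    rw [Ψ_mk, ψ0_1, Φ_mk, φ0_4, y]

lemma ΨΦ : Ψ.comp Φ = AlgHom.id R₀ (P ⧸ I) := by
  apply Ideal.Quotient.algHom_ext
  apply MvPolynomial.algHom_ext
  intro i
  fin_cases i
  · show Ψ (Φ (Ideal.Quotient.mk I (X 0))) = Ideal.Quotient.mk I (X 0)
    rw [Φ_mk, φ0_0, map_zero, eq_comm, Ideal.Quotient.eq_zero_iff_mem]; exact g4_mem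
  · show Ψ (Φ (Ideal.Quotient.mk I (X 1))) = Ideal.Quotient.mk I (X 1)
    rw [Φ_mk, φ0_1, map_zero, eq_comm, Ideal.Quotient.eq_zero_iff_mem]; exact memA2
  · show Ψ (Φ (Ideal.Quotient.mk I (X 2))) = Ideal.Quotient.mk I (X 2)
    rw [Φ_mk, φ0_2, x, Ψ_mk, ψ0_0]
  · show Ψ (Φ (Ideal.Quotient.mk I (X 3))) = Ideal.Quotient.mk I (X 3)
    rw [Φ_mk, φ0_3, map_neg, x, Ψ_mk, ψ0_0, ← map_neg, Ideal.Quotient.eq]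
    rw [show (-X 2 - X 3 : P) = -(X 2 + X 3) by ring]
    exact I.neg_mem memBB
  · show Ψ (Φ (Ideal.Quotient.mk I (X 4))) = Ideal.Quotient.mk I (X 4)
    rw [Φ_mk, φ0_4, y, Ψ_mk, ψ0_1]
  · show Ψ (Φ (Ideal.Quotient.mk I (X 5))) = Ideal.Quotient.mk I (X 5)
    rw [Φ_mk, φ0_5, map_neg, y, Ψ_mk, ψ0_1, ← map_neg, Ideal.Quotient.eq]
    rw [show (-X 4 - X 5 : P) = -(X 4 + X 5) by ring]
    exact I.neg_mem memCC

def theEquiv : (P ⧸ I) ≃ₐ[R₀] Q2 := AlgEquiv.ofAlgHom Φ Ψ ΦΨ ΨΦ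

end Stmt6

/-- Over `R₀ = ℤ[[t]]`, in `R₀[A₁, A₂, B₁, B₂, C₁, C₂]`
(variables `X 0, …, X 5`), the quotient by the ideal generated by
`A₁ + A₂ − t·B₁ − t·B₂`, `B₁ + B₂ − t·C₁ − t·C₂`, `C₁ + C₂ − t·A₂`, `A₁`,
`A₁·A₂ − t²·B₁·B₂`, `B₁·B₂ − t²·C₁·C₂`, `C₁·C₂` is isomorphic as an `R₀`-algebra to
`R₀[B, C]/(B², C²)`.  (Singularized trefoil.) -/
theorem stmt_6 :
    letI R₀ := PowerSeries ℤ
    letI P := MvPolynomial (Fin 6) R₀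
    letI t : P := MvPolynomial.C (PowerSeries.X : R₀)
    letI A₁ : P := MvPolynomial.X 0
    letI A₂ : P := MvPolynomial.X 1
    letI B₁ : P := MvPolynomial.X 2
    letI B₂ : P := MvPolynomial.X 3
    letI C₁ : P := MvPolynomial.X 4
    letI C₂ : P := MvPolynomial.X 5
    letI I : Ideal P := Ideal.span
      {A₁ + A₂ - t * B₁ - t * B₂,
       B₁ + B₂ - t * C₁ - t * C₂,
       C₁ + C₂ - t * A₂,
       A₁,
       A₁ * A₂ - t ^ 2 * B₁ * B₂,
       B₁ * B₂ - t ^ 2 * C₁ * C₂,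
       C₁ * C₂}
    Nonempty ((P ⧸ I) ≃ₐ[R₀]
      (MvPolynomial (Fin 2) R₀ ⧸
        Ideal.span {(MvPolynomial.X 0 : MvPolynomial (Fin 2) R₀) ^ 2,
          (MvPolynomial.X 1 : MvPolynomial (Fin 2) R₀) ^ 2})) :=
  ⟨Stmt6.theEquiv⟩
end
end
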